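/- Let C and D be finite nonempty persistence diagrams with maximum death values d_max^C > d_max^D, and σ > 0. Then the unweighted Gaussian persistence curves G_C(t) = Σ_{(b,d)∈C} Φ((t−b)/σ)·Φ((d−t)/σ) and G_D satisfy: there exists T such that G_C(t) > G_D(t) for all t > T; in particular G_C ≠ G_D. -/

import Mathlib

/-!
Translating the integration variable by `δ ≥ 0` gives the Gaussian tail estimate
`Φ(x) ≤ exp (δ x + δ²/2) Φ(x + δ)`, so `Φ(x) = o(Φ(x + δ))` as `x → -∞`. For large `t`,
every term of `G_D(t)` is at most `Φ((d_max^D - t)/σ)`, while the term of `G_C(t)` at a point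
of death `d_max^C` is at least `Φ(0) Φ((d_max^C - t)/σ)`; with `δ = (d_max^C - d_max^D)/σ`
the latter eventually dominates `card D` times the former.
-/

open MeasureTheory Real Filter

noncomputable def phi (t : ℝ) : ℝ := Real.exp (-t^2/2) / Real.sqrt (2*Real.pi)

noncomputable def Phi (x : ℝ) : ℝ := ∫ s in Set.Iic x, phi s

open ProbabilityTheory Topology

lemma phi_eq_gaussianPDFReal : phi = gaussianPDFReal 0 1 := by
  ext t
  simp [phi, gaussianPDFReal, div_eq_inv_mul]

lemma phi_pos (t : ℝ) : 0 < phi t :=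
  phi_eq_gaussianPDFReal ▸ gaussianPDFReal_pos _ _ _ one_ne_zero

lemma integrable_phi : Integrable phi :=
  phi_eq_gaussianPDFReal ▸ integrable_gaussianPDFReal _ _

lemma integral_phi : ∫ t, phi t = 1 :=
  phi_eq_gaussianPDFReal ▸ integral_gaussianPDFReal_eq_one _ one_ne_zero

lemma phi_sub_eq_exp_mul (u δ : ℝ) : phi (u - δ) = exp (δ * u - δ ^ 2 / 2) * phi u := by
  simp only [phi, mul_div_assoc', ← exp_add]
  ring_nf

lemma Phi_pos (x : ℝ) : 0 < Phi x := by
  rw [Phi, setIntegral_pos_iff_support_of_nonneg_ae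
    (.of_forall fun t => (phi_pos t).le) integrable_phi.integrableOn]
  simp [(phi_pos _).ne', Function.support_eq_univ]

lemma Phi_le_one (x : ℝ) : Phi x ≤ 1 :=
  integral_phi ▸ setIntegral_le_integral integrable_phi (.of_forall fun t => (phi_pos t).le)

lemma Phi_mono : Monotone Phi := fun _ _ hxy =>
  setIntegral_mono_set integrable_phi.integrableOn (.of_forall fun t => (phi_pos t).le)
    (Set.Iic_subset_Iic.2 hxy).eventuallyLE

lemma Phi_eq_setIntegral_phi_sub (x δ : ℝ) :
    Phi x = ∫ u in Set.Iic (x + δ), phi (u - δ) := by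
  rw [Phi, ← (measurePreserving_sub_right volume δ).setIntegral_preimage_emb
    (measurableEmbedding_subRight δ) phi (Set.Iic x)]
  congr 2
  ext u
  simp

lemma Phi_le_exp_mul_Phi_add {δ : ℝ} (hδ : 0 ≤ δ) (x : ℝ) :
    Phi x ≤ exp (δ * x + δ ^ 2 / 2) * Phi (x + δ) := by
  rw [Phi_eq_setIntegral_phi_sub x δ, Phi, ← integral_const_mul]
  refine setIntegral_mono_on (integrable_phi.comp_sub_right δ).integrableOn
    (integrable_phi.integrableOn.const_mul _) measurableSet_Iic fun u (hu : u ≤ x + δ) => ?_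
  rw [phi_sub_eq_exp_mul]
  exact mul_le_mul_of_nonneg_right (exp_le_exp.2 (by nlinarith)) (phi_pos u).le

lemma eventually_mul_Phi_lt_mul_Phi_add {n c δ : ℝ} (hn : 0 ≤ n) (hc : 0 < c) (hδ : 0 < δ) :
    ∀ᶠ x in atBot, n * Phi x < c * Phi (x + δ) := by
  have hexp : Tendsto (fun x => n * exp (δ * x + δ ^ 2 / 2)) atBot (𝓝 0) := by
    simpa using (tendsto_exp_atBot.comp (tendsto_atBot_add_const_right _ _
      (tendsto_id.const_mul_atBot hδ))).const_mul n
  filter_upwards [hexp.eventually_lt_const hc] with x hx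
  calc n * Phi x ≤ n * exp (δ * x + δ ^ 2 / 2) * Phi (x + δ) := by
        rw [mul_assoc]
        exact mul_le_mul_of_nonneg_left (Phi_le_exp_mul_Phi_add hδ.le x) hn
    _ < c * Phi (x + δ) := mul_lt_mul_of_pos_right hx (Phi_pos _)

noncomputable def gaussianPersistenceCurve (σ : ℝ) (C : Multiset (ℝ × ℝ)) (t : ℝ) : ℝ :=
  (C.map fun p => Phi ((t - p.1) / σ) * Phi ((p.2 - t) / σ)).sum

lemma gaussianPersistenceCurve_le_card_mul {σ d : ℝ} {D : Multiset (ℝ × ℝ)} (hσ : 0 ≤ σ)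
    (hD : ∀ p ∈ D, p.2 ≤ d) (t : ℝ) :
    gaussianPersistenceCurve σ D t ≤ Multiset.card D * Phi ((d - t) / σ) := by
  rw [gaussianPersistenceCurve, ← nsmul_eq_mul,
    ← Multiset.card_map fun p => Phi ((t - p.1) / σ) * Phi ((p.2 - t) / σ)]
  refine Multiset.sum_le_card_nsmul _ _ fun a ha => ?_
  obtain ⟨p, hp, rfl⟩ := Multiset.mem_map.1 ha
  calc Phi ((t - p.1) / σ) * Phi ((p.2 - t) / σ) ≤ 1 * Phi ((d - t) / σ) :=
        mul_le_mul (Phi_le_one _) (Phi_mono (by gcongr; exact hD p hp)) (Phi_pos _).le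
          zero_le_one
    _ = Phi ((d - t) / σ) := one_mul _

lemma mul_Phi_le_gaussianPersistenceCurve {σ t : ℝ} {C : Multiset (ℝ × ℝ)} {p : ℝ × ℝ}
    (hp : p ∈ C) :
    Phi ((t - p.1) / σ) * Phi ((p.2 - t) / σ) ≤ gaussianPersistenceCurve σ C t :=
  Multiset.single_le_sum (fun _ ha => by
    obtain ⟨q, -, rfl⟩ := Multiset.mem_map.1 ha
    exact mul_nonneg (Phi_pos _).le (Phi_pos _).le) _ (Multiset.mem_map_of_mem _ hp)

lemma eventually_gaussianPersistenceCurve_lt {σ d : ℝ} {C D : Multiset (ℝ × ℝ)} {p : ℝ × ℝ}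
    (hσ : 0 < σ) (hp : p ∈ C) (hD : ∀ q ∈ D, q.2 ≤ d) (hd : d < p.2) :
    ∀ᶠ t in atTop, gaussianPersistenceCurve σ D t < gaussianPersistenceCurve σ C t := by
  have hδ : 0 < (p.2 - d) / σ := div_pos (by linarith) hσ
  have hx : Tendsto (fun t => (d - t) / σ) atTop atBot :=
    (tendsto_atBot_add_const_left atTop d tendsto_neg_atTop_atBot).atBot_div_const hσ
  filter_upwards [hx.eventually (eventually_mul_Phi_lt_mul_Phi_add
      (Nat.cast_nonneg (Multiset.card D)) (Phi_pos 0) hδ), eventually_ge_atTop p.1] with t ht hpt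
  calc gaussianPersistenceCurve σ D t ≤ Multiset.card D * Phi ((d - t) / σ) :=
        gaussianPersistenceCurve_le_card_mul hσ.le hD t
    _ < Phi 0 * Phi ((d - t) / σ + (p.2 - d) / σ) := ht
    _ = Phi 0 * Phi ((p.2 - t) / σ) := by congr 2; ring
    _ ≤ Phi ((t - p.1) / σ) * Phi ((p.2 - t) / σ) :=
        mul_le_mul_of_nonneg_right (Phi_mono (div_nonneg (by linarith) hσ.le)) (Phi_pos _).le
    _ ≤ gaussianPersistenceCurve σ C t := mul_Phi_le_gaussianPersistenceCurve hp

theorem stmt19_general (C D : Multiset (ℝ × ℝ))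
    (σ dC dD : ℝ) (hσ : 0 < σ)
    (hdC : dC ∈ C.map Prod.snd)
    (hdDmax : ∀ p ∈ D, p.2 ≤ dD)
    (hmax : dD < dC) :
    (∃ T : ℝ, ∀ t > T,
      (D.map (fun p => Phi ((t - p.1) / σ) * Phi ((p.2 - t) / σ))).sum <
      (C.map (fun p => Phi ((t - p.1) / σ) * Phi ((p.2 - t) / σ))).sum) ∧
    (fun t : ℝ => (C.map (fun p => Phi ((t - p.1) / σ) * Phi ((p.2 - t) / σ))).sum) ≠
    (fun t : ℝ => (D.map (fun p => Phi ((t - p.1) / σ) * Phi ((p.2 - t) / σ))).sum) := by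
  obtain ⟨p, hp, rfl⟩ := Multiset.mem_map.1 hdC
  have h := eventually_gaussianPersistenceCurve_lt hσ hp hdDmax hmax
  refine ⟨(eventually_atTop.1 h).imp fun T hT t ht => hT t ht.le, fun heq => ?_⟩
  obtain ⟨t, ht⟩ := h.exists
  exact ht.ne' (congrFun heq t)

theorem stmt19 (C D : Multiset (ℝ × ℝ)) (hC : ∀ p ∈ C, p.1 < p.2)
    (hD : ∀ p ∈ D, p.1 < p.2) (hCne : C ≠ 0) (hDne : D ≠ 0)
    (σ dC dD : ℝ) (hσ : 0 < σ)
    (hdC : dC ∈ C.map Prod.snd) (hdCmax : ∀ p ∈ C, p.2 ≤ dC)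
    (hdD : dD ∈ D.map Prod.snd) (hdDmax : ∀ p ∈ D, p.2 ≤ dD)
    (hmax : dD < dC) :
    (∃ T : ℝ, ∀ t > T,
      (D.map (fun p => Phi ((t - p.1) / σ) * Phi ((p.2 - t) / σ))).sum <
      (C.map (fun p => Phi ((t - p.1) / σ) * Phi ((p.2 - t) / σ))).sum) ∧
    (fun t : ℝ => (C.map (fun p => Phi ((t - p.1) / σ) * Phi ((p.2 - t) / σ))).sum) ≠
    (fun t : ℝ => (D.map (fun p => Phi ((t - p.1) / σ) * Phi ((p.2 - t) / σ))).sum) :=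
  stmt19_general C D σ dC dD hσ hdC hdDmax hmax
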